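/- Let Σ be a real symmetric positive definite 2n×2n matrix (n = n_A + n_B), ħ > 0, and M = (ħ/2)Σ⁻¹ with blocks M_AA, M_AB, M_BA = M_ABᵀ, M_BB. Set M♯_AA = M_AA + |M_AB| and M♯_BB = M_BB + |M_BA|, where |M_AB| = (M_AB M_ABᵀ)^{1/2} and |M_BA| = (M_ABᵀ M_AB)^{1/2}. If every complex eigenvalue of J_{n_A}·M♯_AA has modulus ≤ 1 and every complex eigenvalue of J_{n_B}·M♯_BB has modulus ≤ 1 (i.e., all symplectic eigenvalues of M♯_AA and of M♯_BB are ≤ 1), then the Werner–Wolf separability condition holds for Σ: there exist real symmetric Σ_A, Σ_B with Σ_A + (iħ/2)J_{n_A} ≥ 0, Σ_B + (iħ/2)J_{n_B} ≥ 0, and Σ − (Σ_A ⊕ Σ_B) positive semidefinite; hence the Gaussian state with covariance matrix Σ is separable. -/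

import Mathlib

open Matrix
open scoped ComplexOrder

noncomputable section

/-- The phase space index type for `ℝ^{2m}`, split as positions ⊕ momenta. -/
abbrev PS (m : ℕ) := Fin m ⊕ Fin m

/-- The standard symplectic matrix `J_m = [[0, I_m], [-I_m, 0]]`. -/
def symplJ (m : ℕ) : Matrix (PS m) (PS m) ℝ := Matrix.fromBlocks 0 1 (-1) 0

/-- `S ∈ Sp(m)`: `Sᵀ J_m S = J_m`. -/
def IsSymplectic {m : ℕ} (S : Matrix (PS m) (PS m) ℝ) : Prop :=
  Sᵀ * symplJ m * S = symplJ m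

/-- The quantum condition `Σ + (i·hbar/2) J_m ≥ 0`, i.e. the complex Hermitian matrix
`Σ + (i·hbar/2) J_m` is positive semidefinite. -/
def QuantumCond (m : ℕ) (hbar : ℝ) (Sig : Matrix (PS m) (PS m) ℝ) : Prop :=
  (Sig.map Complex.ofReal + (hbar / 2 : ℝ) • Complex.I • (symplJ m).map Complex.ofReal).PosSemidef

/-- `μ ∈ ℂ` is an eigenvalue of the real matrix `N` (viewed as a complex matrix). -/
def IsEigenvalue {ι : Type} [Fintype ι] [DecidableEq ι] (N : Matrix ι ι ℝ) (μ : ℂ) : Prop :=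
  (N.map Complex.ofReal - μ • 1).det = 0

/-- The Werner–Wolf separability condition for a covariance matrix `Σ` on
`ℝ^{2n_A} ⊕ ℝ^{2n_B}`: there exist real symmetric `Σ_A`, `Σ_B` satisfying the quantum
conditions and with `Σ - Σ_A ⊕ Σ_B` positive semidefinite.  It is necessary and sufficient
for the separability of the Gaussian state with covariance matrix `Σ`. -/
def WernerWolf (nA nB : ℕ) (hbar : ℝ)
    (Sig : Matrix (PS nA ⊕ PS nB) (PS nA ⊕ PS nB) ℝ) : Prop :=
  ∃ (SigA : Matrix (PS nA) (PS nA) ℝ) (SigB : Matrix (PS nB) (PS nB) ℝ),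
    SigA.IsSymm ∧ SigB.IsSymm ∧
    QuantumCond nA hbar SigA ∧ QuantumCond nB hbar SigB ∧
    (Sig - Matrix.fromBlocks SigA 0 0 SigB).PosSemidef


set_option linter.unusedSectionVars false
set_option maxHeartbeats 1600000

section Helpers
variable {ι κ : Type} [Fintype ι] [DecidableEq ι] [Fintype κ] [DecidableEq κ]

lemma psd_smul_real {M : Matrix ι ι ℝ} (hM : M.PosSemidef) {c : ℝ} (hc : 0 ≤ c) :
    (c • M).PosSemidef := by
  refine .of_dotProduct_mulVec_nonneg ?_ fun x => ?_
  · unfold Matrix.IsHermitian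
    rw [conjTranspose_smul, hM.1]
    simp
  · rw [smul_mulVec, dotProduct_smul]
    simpa using mul_nonneg hc (hM.dotProduct_mulVec_nonneg x)

lemma posdef_smul_real {M : Matrix ι ι ℝ} (hM : M.PosDef) {c : ℝ} (hc : 0 < c) :
    (c • M).PosDef := by
  refine .of_dotProduct_mulVec_pos ?_ fun x hx => ?_
  · unfold Matrix.IsHermitian
    rw [conjTranspose_smul, hM.1]
    simp
  · rw [smul_mulVec, dotProduct_smul]
    simpa using mul_pos hc (hM.dotProduct_mulVec_pos hx)

/-- real symmetric matrix: conjTranspose = transpose helper. -/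

lemma real_isHermitian_iff_isSymm {M : Matrix ι ι ℝ} : M.IsHermitian ↔ M.IsSymm := by
  rw [Matrix.IsHermitian, Matrix.IsSymm, conjTranspose_eq_transpose_of_trivial]

/-- block-diagonal PSD. -/

lemma psd_fromBlocks_diag {A : Matrix ι ι ℝ} {B : Matrix κ κ ℝ}
    (hA : A.PosSemidef) (hB : B.PosSemidef) : (fromBlocks A 0 0 B).PosSemidef := by
  refine .of_dotProduct_mulVec_nonneg ?_ fun x => ?_
  · unfold Matrix.IsHermitian
    rw [fromBlocks_conjTranspose, hA.1, hB.1]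
    simp
  · rw [fromBlocks_mulVec, dotProduct_block]
    simp only [zero_mulVec, add_zero, zero_add, Sum.elim_comp_inl, Sum.elim_comp_inr]
    have := hA.dotProduct_mulVec_nonneg (x ∘ Sum.inl)
    have := hB.dotProduct_mulVec_nonneg (x ∘ Sum.inr)
    simp only [star_trivial] at *
    positivity

lemma posdef_fromBlocks_diag {A : Matrix ι ι ℝ} {B : Matrix κ κ ℝ}
    (hA : A.PosDef) (hB : B.PosDef) : (fromBlocks A 0 0 B).PosDef := by
  refine .of_dotProduct_mulVec_pos (psd_fromBlocks_diag hA.posSemidef hB.posSemidef).1 fun x hx => ?_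
  rw [fromBlocks_mulVec, dotProduct_block]
  simp only [zero_mulVec, add_zero, zero_add, Sum.elim_comp_inl, Sum.elim_comp_inr]
  have h1 : x ∘ Sum.inl ≠ 0 ∨ x ∘ Sum.inr ≠ 0 := by
    by_contra h
    push_neg at h
    apply hx
    ext (i|i)
    · exact congrFun h.1 i
    · exact congrFun h.2 i
  simp only [star_trivial]
  rcases h1 with h1 | h1
  · have := hA.dotProduct_mulVec_pos h1
    have := hB.posSemidef.dotProduct_mulVec_nonneg (x ∘ Sum.inr)
    simp only [star_trivial] at *
    positivity
  · have := hB.dotProduct_mulVec_pos h1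
    have := hA.posSemidef.dotProduct_mulVec_nonneg (x ∘ Sum.inl)
    simp only [star_trivial] at *
    positivity

/-- the (1,1) block of a PosDef matrix is PosDef -/

lemma posdef_toBlocks₁₁ {M : Matrix (ι ⊕ κ) (ι ⊕ κ) ℝ} (hM : M.PosDef) :
    M.toBlocks₁₁.PosDef := by
  refine .of_dotProduct_mulVec_pos ?_ fun x hx => ?_
  · ext i j
    have := congrFun (congrFun hM.1 (Sum.inl i)) (Sum.inl j)
    simpa [Matrix.toBlocks₁₁, Matrix.conjTranspose_apply] using this
  · have key := hM.dotProduct_mulVec_pos (x := Sum.elim x 0) (by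
      intro h
      exact hx (by ext i; exact congrFun h (Sum.inl i)))
    rw [← fromBlocks_toBlocks M, fromBlocks_mulVec, dotProduct_block] at key
    simpa [Matrix.toBlocks₁₁] using key

lemma posdef_toBlocks₂₂ {M : Matrix (ι ⊕ κ) (ι ⊕ κ) ℝ} (hM : M.PosDef) :
    M.toBlocks₂₂.PosDef := by
  refine .of_dotProduct_mulVec_pos ?_ fun x hx => ?_
  · ext i j
    have := congrFun (congrFun hM.1 (Sum.inr i)) (Sum.inr j)
    simpa [Matrix.toBlocks₂₂, Matrix.conjTranspose_apply] using this
  · have key := hM.dotProduct_mulVec_pos (x := Sum.elim 0 x) (by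
      intro h
      exact hx (by ext i; exact congrFun h (Sum.inr i)))
    rw [← fromBlocks_toBlocks M, fromBlocks_mulVec, dotProduct_block] at key
    simpa [Matrix.toBlocks₂₂] using key

lemma congr_dot {B U : Matrix ι ι ℝ} (x : ι → ℝ) :
    star (Uᴴ *ᵥ x) ⬝ᵥ B *ᵥ (Uᴴ *ᵥ x) = star x ⬝ᵥ (U * B * Uᴴ) *ᵥ x := by
  rw [star_mulVec, ← Matrix.mulVec_mulVec, Matrix.dotProduct_mulVec (star x ᵥ* Uᴴᴴ),
    conjTranspose_conjTranspose, Matrix.vecMul_vecMul, ← Matrix.dotProduct_mulVec,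
    Matrix.mulVec_mulVec]

/-- PosDef congruence by an invertible matrix : U * B * Uᴴ -/

lemma posdef_congr {B U : Matrix ι ι ℝ} (hB : B.PosDef) (hU : IsUnit U.det) :
    (U * B * Uᴴ).PosDef := by
  have hBt : Bᵀ = B := real_isHermitian_iff_isSymm.1 hB.1
  refine .of_dotProduct_mulVec_pos ?_ fun x hx => ?_
  · unfold Matrix.IsHermitian
    simp [conjTranspose_mul, Matrix.mul_assoc, hBt]
  · have hx' : Uᴴ *ᵥ x ≠ 0 := by
      intro h
      have hUH : (Uᴴ).det ≠ 0 := by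
        simpa [Matrix.det_conjTranspose] using hU.star.ne_zero
      exact hx (Matrix.eq_zero_of_mulVec_eq_zero hUH h)
    have key := hB.dotProduct_mulVec_pos hx'
    rw [congr_dot] at key
    exact key

open scoped MatrixOrder in
/-- square root of a PosDef real matrix: records the needed facts. -/
lemma posdef_sqrt (P : Matrix ι ι ℝ) (hP : P.PosDef) :
    ∃ S : Matrix ι ι ℝ, S.PosSemidef ∧ S * S = P ∧ Sᵀ = S ∧ IsUnit S.det := by
  refine ⟨CFC.sqrt P, (CFC.sqrt_nonneg P).posSemidef, CFC.sqrt_mul_sqrt_self P hP.posSemidef.nonneg,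
    real_isHermitian_iff_isSymm.1 (CFC.sqrt_nonneg P).posSemidef.1, ?_⟩
  have hdet : P.det ≠ 0 := hP.det_pos.ne'
  rw [← CFC.sqrt_mul_sqrt_self P hP.posSemidef.nonneg, Matrix.det_mul] at hdet
  exact isUnit_iff_ne_zero.2 fun h => hdet (by rw [h, zero_mul])

/-- halfway inverse monotone: P ≥ 1 pos def  →  1 - P⁻¹ psd, general form -/

lemma inv_sub_inv_psd {P Q : Matrix ι ι ℝ} (hP : P.PosDef) (hQ : Q.PosDef)
    (h : (Q - P).PosSemidef) : (P⁻¹ - Q⁻¹).PosSemidef := by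
  obtain ⟨T, hT, hTT, hTs, hTd⟩ := posdef_sqrt _ hP.inv
  have hTH : Tᴴ = T := by rw [conjTranspose_eq_transpose_of_trivial, hTs]
  have hPu : IsUnit P.det := hP.det_pos.ne'.isUnit
  have hQu : IsUnit Q.det := hQ.det_pos.ne'.isUnit
  have hPinv : P = T⁻¹ * T⁻¹ := by
    rw [← Matrix.nonsing_inv_nonsing_inv P hPu, ← hTT, Matrix.mul_inv_rev]
  have hTPT : T * P * T = 1 := by
    rw [hPinv, Matrix.mul_assoc, Matrix.mul_assoc, Matrix.nonsing_inv_mul _ hTd, Matrix.mul_one,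
      Matrix.mul_nonsing_inv _ hTd]
  -- G := T * Q * T is pos def and G - 1 is psd
  have hG : (T * Q * T).PosDef := by
    have := posdef_congr hQ hTd
    rwa [hTH] at this
  set G := T * Q * T with hGdef
  have hG1 : (G - 1).PosSemidef := by
    have := h.mul_mul_conjTranspose_same T
    rwa [hTH, Matrix.mul_sub, Matrix.sub_mul, hTPT, ← hGdef] at this
  -- step 2 : 1 - G⁻¹ psd
  obtain ⟨S, hS, hSS, hSs, hSd⟩ := posdef_sqrt _ hG.inv
  have hSH : Sᴴ = S := by rw [conjTranspose_eq_transpose_of_trivial, hSs]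
  have hGu : IsUnit G.det := hG.det_pos.ne'.isUnit
  have hGinv : G = S⁻¹ * S⁻¹ := by
    rw [← Matrix.nonsing_inv_nonsing_inv G hGu, ← hSS, Matrix.mul_inv_rev]
  have hSGS : S * G * S = 1 := by
    rw [hGinv, Matrix.mul_assoc, Matrix.mul_assoc, Matrix.nonsing_inv_mul _ hSd, Matrix.mul_one,
      Matrix.mul_nonsing_inv _ hSd]
  have h2 : ((1 : Matrix ι ι ℝ) - G⁻¹).PosSemidef := by
    have := hG1.mul_mul_conjTranspose_same S
    rwa [hSH, Matrix.mul_sub, Matrix.sub_mul, hSGS, Matrix.mul_one, hSS] at this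
  -- step 3 : conjugate back by T
  have hTGT : T * G⁻¹ * T = Q⁻¹ := by
    rw [hGdef, Matrix.mul_inv_rev, Matrix.mul_inv_rev, ← Matrix.mul_assoc, ← Matrix.mul_assoc,
      Matrix.mul_nonsing_inv _ hTd, Matrix.one_mul, Matrix.mul_assoc,
      Matrix.nonsing_inv_mul _ hTd, Matrix.mul_one]
  have := h2.mul_mul_conjTranspose_same T
  rwa [hTH, Matrix.mul_sub, Matrix.sub_mul, Matrix.mul_one, hTT, hTGT] at this

lemma intertwine {A : Matrix ι ι ℝ} {B : Matrix κ κ ℝ} {X : Matrix ι κ ℝ}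
    (hA : A.PosSemidef) (hB : B.PosSemidef) (h : A * A * X = X * (B * B)) :
    A * X = X * B := by
  set U : Matrix ι ι ℝ := (Matrix.IsHermitian.eigenvectorUnitary hA.1 : Matrix ι ι ℝ) with hUdef
  set V : Matrix κ κ ℝ := (Matrix.IsHermitian.eigenvectorUnitary hB.1 : Matrix κ κ ℝ) with hVdef
  set a : ι → ℝ := hA.1.eigenvalues with hadef
  set b : κ → ℝ := hB.1.eigenvalues with hbdef
  have hU1 : star U * U = 1 := Unitary.coe_star_mul_self (Matrix.IsHermitian.eigenvectorUnitary hA.1)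
  have hU2 : U * star U = 1 := Unitary.coe_mul_star_self (Matrix.IsHermitian.eigenvectorUnitary hA.1)
  have hV1 : star V * V = 1 := Unitary.coe_star_mul_self (Matrix.IsHermitian.eigenvectorUnitary hB.1)
  have hV2 : V * star V = 1 := Unitary.coe_mul_star_self (Matrix.IsHermitian.eigenvectorUnitary hB.1)
  have cU1 : ∀ {n : Type} (Z : Matrix ι n ℝ), U * (star U * Z) = Z := fun Z => by
    rw [← Matrix.mul_assoc, hU2, Matrix.one_mul]
  have cU2 : ∀ {n : Type} (Z : Matrix ι n ℝ), star U * (U * Z) = Z := fun Z => by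
    rw [← Matrix.mul_assoc, hU1, Matrix.one_mul]
  have cV1 : ∀ {n : Type} (Z : Matrix κ n ℝ), V * (star V * Z) = Z := fun Z => by
    rw [← Matrix.mul_assoc, hV2, Matrix.one_mul]
  have cV2 : ∀ {n : Type} (Z : Matrix κ n ℝ), star V * (V * Z) = Z := fun Z => by
    rw [← Matrix.mul_assoc, hV1, Matrix.one_mul]
  have hAspec : A = U * Matrix.diagonal a * star U := by
    have := hA.1.spectral_theorem
    simpa [RCLike.ofReal_real_eq_id] using this
  have hBspec : B = V * Matrix.diagonal b * star V := by
    have := hB.1.spectral_theorem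
    simpa [RCLike.ofReal_real_eq_id] using this
  set Y : Matrix ι κ ℝ := star U * X * V with hYdef
  have hXY : U * Y * star V = X := by
    rw [hYdef]
    simp only [Matrix.mul_assoc, cU1, cV2]
    simp only [hV2, Matrix.mul_one]
  have hDa : star U * A * U = Matrix.diagonal a := by
    rw [hAspec]
    simp only [Matrix.mul_assoc, cU2]
    simp only [← Matrix.mul_assoc, hU1, Matrix.one_mul]
    simp [hU1, hV1]
  have hDb : star V * B * V = Matrix.diagonal b := by
    rw [hBspec]
    simp only [Matrix.mul_assoc, cV2]
    simp only [← Matrix.mul_assoc, hV1, Matrix.one_mul]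
    simp [hU1, hV1]
  have h2 : A * (A * (X * V)) = X * (B * (B * V)) := by
    have := congrArg (fun Z => Z * V) h
    simpa only [Matrix.mul_assoc] using this
  have key : Matrix.diagonal a * Matrix.diagonal a * Y =
      Y * (Matrix.diagonal b * Matrix.diagonal b) := by
    rw [← hDa, ← hDb, hYdef]
    simp only [Matrix.mul_assoc, cU1, cV2, cV1]
    rw [h2]
  have hab : ∀ i j, a i * Y i j = Y i j * b j := by
    intro i j
    have := congrFun (congrFun key i) j
    simp only [Matrix.diagonal_mul_diagonal, Matrix.diagonal_mul, Matrix.mul_diagonal] at this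
    rcases eq_or_ne (Y i j) 0 with h0 | h0
    · simp [h0]
    · have heq : a i * a i = b j * b j :=
        mul_right_cancel₀ h0 (by linear_combination this)
      have haa : a i = b j := by
        have h1 : 0 ≤ a i := hA.eigenvalues_nonneg i
        have h2 : 0 ≤ b j := hB.eigenvalues_nonneg j
        by_contra hne
        rcases lt_or_gt_of_ne hne with hlt | hgt
        · have hpr : 0 < (b j - a i) * (b j + a i) := mul_pos (by linarith) (by linarith)
          nlinarith [heq, hpr]
        · have hpr : 0 < (a i - b j) * (a i + b j) := mul_pos (by linarith) (by linarith)
          nlinarith [heq, hpr]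
      rw [haa, mul_comm]
  have hDaY : Matrix.diagonal a * Y = Y * Matrix.diagonal b := by
    ext i j
    rw [Matrix.diagonal_mul, Matrix.mul_diagonal]
    exact hab i j
  have h3 : Matrix.diagonal a * (Y * star V) = Y * (Matrix.diagonal b * star V) := by
    have := congrArg (fun Z => Z * star V) hDaY
    simpa only [Matrix.mul_assoc] using this
  rw [← hXY, hAspec, hBspec]
  simp only [Matrix.mul_assoc, cU2, cV2]
  rw [h3]

lemma kpsd {A : Matrix ι ι ℝ} {B : Matrix κ κ ℝ} {C : Matrix ι κ ℝ}
    (hA : A.PosSemidef) (hB : B.PosSemidef)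
    (hA2 : A * A = C * Cᵀ) (hB2 : B * B = Cᵀ * C) :
    (fromBlocks A C Cᵀ B).PosSemidef := by
  have hAs : Aᵀ = A := real_isHermitian_iff_isSymm.1 hA.1
  have hBs : Bᵀ = B := real_isHermitian_iff_isSymm.1 hB.1
  have hAC : A * C = C * B := by
    refine intertwine hA hB ?_
    rw [hA2, hB2, Matrix.mul_assoc]
  have hCtA : Cᵀ * A = B * Cᵀ := by
    have := congrArg Matrix.transpose hAC
    rw [Matrix.transpose_mul, Matrix.transpose_mul, hAs, hBs] at this
    exact this
  set K : Matrix (ι ⊕ κ) (ι ⊕ κ) ℝ := fromBlocks A C Cᵀ B with hKdef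
  have hKh : K.IsHermitian := by
    rw [Matrix.IsHermitian, conjTranspose_eq_transpose_of_trivial, hKdef, fromBlocks_transpose,
      transpose_transpose, hAs, hBs]
  set D : Matrix (ι ⊕ κ) (ι ⊕ κ) ℝ := fromBlocks A 0 0 B with hDdef
  have hD : D.PosSemidef := psd_fromBlocks_diag hA hB
  have hKK : K * K = D * K + D * K := by
    rw [hKdef, hDdef]
    rw [Matrix.fromBlocks_multiply, Matrix.fromBlocks_multiply, Matrix.fromBlocks_add]
    rw [hA2, hB2, hAC, hCtA]
    simp
  refine hKh.posSemidef_iff_eigenvalues_nonneg.mpr fun i => ?_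
  show (0 : ℝ) ≤ hKh.eigenvalues i
  by_contra hneg
  push_neg at hneg
  set t := hKh.eigenvalues i with htdef
  set v : (ι ⊕ κ) → ℝ := ⇑(hKh.eigenvectorBasis i) with hvdef
  have hv : K *ᵥ v = t • v := hKh.mulVec_eigenvectorBasis i
  have hvne : v ≠ 0 := by
    intro h0
    have hb := hKh.eigenvectorBasis.toBasis.ne_zero i
    simp only [OrthonormalBasis.coe_toBasis] at hb
    exact hb (by ext j; simpa using congrFun h0 j)
  have h2t : (2 * t) ≠ 0 := by nlinarith
  have h5 : (2 * t) • (D *ᵥ v) = (t * t) • v := by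
    have e1 : (K * K) *ᵥ v = (t * t) • v := by
      rw [← Matrix.mulVec_mulVec, hv, mulVec_smul, hv, smul_smul]
    rw [hKK, add_mulVec, ← Matrix.mulVec_mulVec, hv, mulVec_smul] at e1
    rw [two_mul, add_smul]
    exact e1
  have hDv : D *ᵥ v = (t / 2) • v := by
    calc D *ᵥ v = (2 * t)⁻¹ • ((2 * t) • (D *ᵥ v)) := by
          rw [smul_smul, inv_mul_cancel₀ h2t, one_smul]
      _ = (2 * t)⁻¹ • ((t * t) • v) := by rw [h5]
      _ = (t / 2) • v := by
          rw [smul_smul]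
          congr 1
          field_simp
  have hq := hD.dotProduct_mulVec_nonneg v
  rw [star_trivial, hDv, dotProduct_smul] at hq
  have hvv : 0 < v ⬝ᵥ v := by
    rcases lt_or_eq_of_le (Finset.sum_nonneg fun j _ => mul_self_nonneg (v j)) with h | h
    · exact h
    · exact absurd (dotProduct_self_eq_zero.1 h.symm) hvne
  have : (t / 2) * (v ⬝ᵥ v) < 0 := mul_neg_of_neg_of_pos (by linarith) hvv
  simp only [smul_eq_mul] at hq
  linarith

def cx (X : Matrix ι κ ℝ) : Matrix ι κ ℂ := X.map Complex.ofReal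

lemma cx_mul (X : Matrix ι κ ℝ) {γ : Type} [Fintype γ] [DecidableEq γ] (Y : Matrix κ γ ℝ) :
    cx (X * Y) = cx X * cx Y := by
  ext i j
  simp [cx, Matrix.mul_apply]

lemma cx_one : cx (1 : Matrix ι ι ℝ) = 1 := by
  ext i j
  by_cases h : i = j <;> simp [cx, Matrix.one_apply, h]

lemma cx_neg (X : Matrix ι κ ℝ) : cx (-X) = -cx X := by
  ext i j; simp [cx]

lemma cx_add (X Y : Matrix ι κ ℝ) : cx (X + Y) = cx X + cx Y := by
  ext i j; simp [cx]

lemma cx_conjTranspose (X : Matrix ι κ ℝ) : (cx X)ᴴ = cx Xᵀ := by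
  ext i j
  simp [cx, Matrix.conjTranspose_apply, Complex.conj_ofReal]

/-- smul of a complex PSD matrix by a nonneg real -/

lemma psd_smul_complex {M : Matrix ι ι ℂ} (hM : M.PosSemidef) {c : ℝ} (hc : 0 ≤ c) :
    (c • M).PosSemidef := by
  have key : c • M = ((Real.sqrt c : ℂ) • 1) * M * ((Real.sqrt c : ℂ) • 1)ᴴ := by
    rw [conjTranspose_smul, conjTranspose_one]
    rw [Matrix.smul_mul, Matrix.mul_smul, Matrix.one_mul, Matrix.mul_one, smul_smul]
    rw [RCLike.star_def, Complex.conj_ofReal, ← Complex.ofReal_mul,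
      Real.mul_self_sqrt hc]
    ext i j
    simp [Complex.real_smul]
  rw [key]
  exact hM.mul_mul_conjTranspose_same _

/-- The core of the quantum condition lemma. -/

lemma quantum_core {J N : Matrix ι ι ℝ} (hJ : Jᵀ = -J) (hN : N.PosDef)
    (heig : ∀ μ : ℂ, (cx (J * N) - μ • 1).det = 0 → ‖μ‖ ≤ 1) :
    (cx N⁻¹ + Complex.I • cx J).PosSemidef := by
  obtain ⟨R, hR, hRR, hRs, hRd⟩ := posdef_sqrt N hN
  have hNu : IsUnit N.det := hN.det_pos.ne'.isUnit
  have hRinv1 : R * R⁻¹ = 1 := Matrix.mul_nonsing_inv _ hRd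
  have hRinv2 : R⁻¹ * R = 1 := Matrix.nonsing_inv_mul _ hRd
  -- complexifications
  set P := cx R with hPdef
  set P' := cx R⁻¹ with hP'def
  have hPP' : P * P' = 1 := by rw [hPdef, hP'def, ← cx_mul, hRinv1, cx_one]
  have hP'P : P' * P = 1 := by rw [hPdef, hP'def, ← cx_mul, hRinv2, cx_one]
  have hPH : Pᴴ = P := by rw [hPdef, cx_conjTranspose, hRs]
  have hP'H : P'ᴴ = P' := by
    rw [hP'def, cx_conjTranspose, Matrix.transpose_nonsing_inv, hRs]
  -- the antisymmetric part
  set K := R * J * R with hKdef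
  have hKt : Kᵀ = -K := by
    rw [hKdef, Matrix.transpose_mul, Matrix.transpose_mul, hRs, hJ]
    rw [Matrix.neg_mul, Matrix.mul_neg, ← Matrix.mul_assoc]
  have hNinv : N⁻¹ = R⁻¹ * R⁻¹ := Matrix.inv_eq_right_inv (by
    rw [← hRR, Matrix.mul_assoc, ← Matrix.mul_assoc R R⁻¹ R⁻¹, hRinv1, Matrix.one_mul, hRinv1])
  have hRNR : R * N⁻¹ * R = 1 := by
    rw [hNinv, Matrix.mul_assoc, Matrix.mul_assoc, hRinv2, Matrix.mul_one, hRinv1]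
  -- the key conjugation identity
  set X := cx N⁻¹ + Complex.I • cx J with hXdef
  have hPXP : P * X * P = 1 + Complex.I • cx K := by
    rw [hXdef, Matrix.mul_add, Matrix.add_mul]
    congr 1
    · rw [hPdef, ← cx_mul, ← cx_mul, hRNR, cx_one]
    · rw [Matrix.mul_smul, Matrix.smul_mul, hPdef, ← cx_mul, ← cx_mul, hKdef]
  -- Hermitian structure
  have hH : (Complex.I • cx K).IsHermitian := by
    rw [Matrix.IsHermitian, conjTranspose_smul, cx_conjTranspose, hKt, cx_neg]
    rw [RCLike.star_def, Complex.conj_I, neg_smul, smul_neg, neg_neg]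
  -- eigenvalue bound
  have hbound : ∀ i, -1 ≤ hH.eigenvalues i := by
    intro i
    set t := hH.eigenvalues i with htdef
    set v : ι → ℂ := ⇑(hH.eigenvectorBasis i) with hvdef
    have hv : (Complex.I • cx K) *ᵥ v = (t : ℂ) • v := by
      have := hH.mulVec_eigenvectorBasis i
      rw [RCLike.real_smul_eq_coe_smul (K := ℂ)] at this
      exact this
    have hvne : v ≠ 0 := by
      intro h0
      have hb := hH.eigenvectorBasis.toBasis.ne_zero i
      simp only [OrthonormalBasis.coe_toBasis] at hb
      exact hb (by ext j; simpa using congrFun h0 j)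
    have hKv : cx K *ᵥ v = (-Complex.I * t) • v := by
      have h1 : Complex.I • (cx K *ᵥ v) = (t : ℂ) • v := by
        rw [← smul_mulVec]; exact hv
      have h2 := congrArg (fun w => (-Complex.I) • w) h1
      simp only [smul_smul] at h2
      rw [neg_mul, Complex.I_mul_I, neg_neg, one_smul] at h2
      exact h2
    have hdet : (cx K - (-Complex.I * t) • 1).det = 0 := by
      rw [← Matrix.exists_mulVec_eq_zero_iff]
      refine ⟨v, hvne, ?_⟩
      rw [Matrix.sub_mulVec, hKv, smul_mulVec, Matrix.one_mulVec, sub_self]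
    -- similarity transfer to J * N
    have hreal : R * (J * N) * R⁻¹ = R * J * R := by
      rw [← hRR]
      simp only [Matrix.mul_assoc, hRinv1, Matrix.mul_one]
    have hKsim : cx K = P * cx (J * N) * P' := by
      rw [hKdef, ← hreal, cx_mul, cx_mul, hPdef, hP'def]
    have hdet2 : (cx (J * N) - (-Complex.I * t) • 1).det = 0 := by
      set μ := -Complex.I * (t : ℂ)
      have hfac : cx K - μ • 1 = P * (cx (J * N) - μ • 1) * P' := by
        rw [Matrix.mul_sub, Matrix.sub_mul, ← hKsim]
        congr 1
        rw [Matrix.mul_smul, Matrix.smul_mul, Matrix.mul_one, hPP']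
      have hdetPP' : P.det * P'.det = 1 := by
        rw [← Matrix.det_mul, hPP', Matrix.det_one]
      rw [hfac, Matrix.det_mul, Matrix.det_mul] at hdet
      have : P.det * (cx (J * N) - μ • 1).det * P'.det =
          (cx (J * N) - μ • 1).det * (P.det * P'.det) := by ring
      rw [this, hdetPP', mul_one] at hdet
      exact hdet
    have habs := heig _ hdet2
    have habs' : ‖-Complex.I * t‖ = |t| := by
      simp
    rw [habs'] at habs
    have := abs_le.1 habs
    linarith [this.1]
  -- assemble positivity of 1 + I • cx K
  have hP1 : (1 + Complex.I • cx K).PosSemidef := by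
    set U : Matrix ι ι ℂ := (Matrix.IsHermitian.eigenvectorUnitary hH : Matrix ι ι ℂ) with hUdef
    have hU2 : U * star U = 1 := Unitary.coe_mul_star_self (Matrix.IsHermitian.eigenvectorUnitary hH)
    have hspec : Complex.I • cx K =
        U * Matrix.diagonal (RCLike.ofReal ∘ hH.eigenvalues) * star U := hH.spectral_theorem
    have hone : (1 : Matrix ι ι ℂ) = U * 1 * star U := by
      rw [Matrix.mul_one, hU2]
    have hdiag : (1 : Matrix ι ι ℂ) + Matrix.diagonal (RCLike.ofReal ∘ hH.eigenvalues) =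
        Matrix.diagonal (fun i => 1 + (hH.eigenvalues i : ℂ)) := by
      rw [← Matrix.diagonal_one, Matrix.diagonal_add]
      congr 1
    have hsum : U * ((1 : Matrix ι ι ℂ) + Matrix.diagonal (RCLike.ofReal ∘ hH.eigenvalues)) * star U
        = 1 + Complex.I • cx K := by
      rw [Matrix.mul_add, Matrix.add_mul, ← hspec, ← hone]
    rw [hdiag] at hsum
    rw [← hsum, Matrix.star_eq_conjTranspose]
    refine Matrix.PosSemidef.mul_mul_conjTranspose_same ?_ U
    refine Matrix.posSemidef_diagonal_iff.mpr fun i => ?_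
    have : (1 : ℂ) + (hH.eigenvalues i : ℂ) = ((1 + hH.eigenvalues i : ℝ) : ℂ) := by
      push_cast; ring
    rw [this]
    exact Complex.zero_le_real.2 (by linarith [hbound i])
  -- conjugate back
  have hXfinal : X = P' * (1 + Complex.I • cx K) * P'ᴴ := by
    rw [hP'H, ← hPXP]
    calc X = (P' * P) * X * (P * P') := by rw [hP'P, hPP', Matrix.one_mul, Matrix.mul_one]
      _ = P' * (P * X * P) * P' := by simp only [Matrix.mul_assoc]
  rw [hXdef] at hXfinal ⊢
  rw [hXfinal]
  exact hP1.mul_mul_conjTranspose_same _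
end Helpers

/-- The quantum condition for `(hbar/2) • N⁻¹` follows from the symplectic-eigenvalue bound. -/
lemma quantumCond_of_eig (m : ℕ) {hbar : ℝ} (hhb : 0 < hbar) {N : Matrix (PS m) (PS m) ℝ}
    (hN : N.PosDef)
    (heig : ∀ μ : ℂ, IsEigenvalue (symplJ m * N) μ → ‖μ‖ ≤ 1) :
    QuantumCond m hbar ((hbar / 2) • N⁻¹) := by
  have hJ : (symplJ m)ᵀ = -(symplJ m) := by
    simp [symplJ, fromBlocks_transpose, fromBlocks_neg]
  have core := quantum_core hJ hN (fun μ hd => heig μ hd)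
  unfold QuantumCond
  have hfact : ((hbar / 2) • N⁻¹).map Complex.ofReal
      + (hbar / 2 : ℝ) • Complex.I • (symplJ m).map Complex.ofReal
      = (hbar / 2 : ℝ) • (cx N⁻¹ + Complex.I • cx (symplJ m)) := by
    rw [smul_add]
    congr 1
    ext i j
    simp [cx, Complex.real_smul, Complex.ofReal_mul]
  rw [hfact]
  exact psd_smul_complex core (by positivity)

/-- second separability criterion: with `M = (hbar/2)Σ⁻¹` written in blocks
and `|M_AB|`, `|M_BA|` the positive semidefinite square roots of `M_AB M_ABᵀ`, `M_ABᵀ M_AB`,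
if all symplectic eigenvalues of `M_AA + |M_AB|` and `M_BB + |M_BA|` are `≤ 1` (i.e. all
complex eigenvalues of `J·(M_AA + |M_AB|)` and `J·(M_BB + |M_BA|)` have modulus `≤ 1`),
then the Werner–Wolf separability condition holds for `Σ`, hence the Gaussian state with
covariance matrix `Σ` is separable. -/
theorem statement13 (nA nB : ℕ) (hA : 0 < nA) (hB : 0 < nB) (hbar : ℝ) (hhb : 0 < hbar)
    (Sig : Matrix (PS nA ⊕ PS nB) (PS nA ⊕ PS nB) ℝ) (hsym : Sig.IsSymm) (hpos : Sig.PosDef)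
    (absA : Matrix (PS nA) (PS nA) ℝ) (absB : Matrix (PS nB) (PS nB) ℝ)
    (habsA : absA.PosSemidef)
    (habsAsq : absA * absA =
      ((hbar / 2) • Sig⁻¹).toBlocks₁₂ * (((hbar / 2) • Sig⁻¹).toBlocks₁₂)ᵀ)
    (habsB : absB.PosSemidef)
    (habsBsq : absB * absB =
      (((hbar / 2) • Sig⁻¹).toBlocks₁₂)ᵀ * ((hbar / 2) • Sig⁻¹).toBlocks₁₂)
    (hAc : ∀ μ : ℂ, IsEigenvalue
        (symplJ nA * (((hbar / 2) • Sig⁻¹).toBlocks₁₁ + absA)) μ → ‖μ‖ ≤ 1)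
    (hBc : ∀ μ : ℂ, IsEigenvalue
        (symplJ nB * (((hbar / 2) • Sig⁻¹).toBlocks₂₂ + absB)) μ → ‖μ‖ ≤ 1) :
    WernerWolf nA nB hbar Sig := by
  set M : Matrix (PS nA ⊕ PS nB) (PS nA ⊕ PS nB) ℝ := (hbar / 2) • Sig⁻¹ with hMdef
  have hhalf : 0 < hbar / 2 := by positivity
  have hMd : M.PosDef := posdef_smul_real hpos.inv hhalf
  have hMsym : Mᵀ = M := real_isHermitian_iff_isSymm.1 hMd.1
  set C : Matrix (PS nA) (PS nB) ℝ := M.toBlocks₁₂ with hCdef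
  set NA : Matrix (PS nA) (PS nA) ℝ := M.toBlocks₁₁ + absA with hNAdef
  set NB : Matrix (PS nB) (PS nB) ℝ := M.toBlocks₂₂ + absB with hNBdef
  have hNA : NA.PosDef := (posdef_toBlocks₁₁ hMd).add_posSemidef habsA
  have hNB : NB.PosDef := (posdef_toBlocks₂₂ hMd).add_posSemidef habsB
  have h11sym : (M.toBlocks₁₁)ᵀ = M.toBlocks₁₁ := by
    ext i j
    exact congrFun (congrFun hMsym (Sum.inl i)) (Sum.inl j)
  have h22sym : (M.toBlocks₂₂)ᵀ = M.toBlocks₂₂ := by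
    ext i j
    exact congrFun (congrFun hMsym (Sum.inr i)) (Sum.inr j)
  have h21 : M.toBlocks₂₁ = Cᵀ := by
    ext i j
    exact congrFun (congrFun hMsym.symm (Sum.inr i)) (Sum.inl j)
  have hNAsym : NAᵀ = NA := by
    rw [hNAdef, transpose_add, h11sym, real_isHermitian_iff_isSymm.1 habsA.1]
  have hNBsym : NBᵀ = NB := by
    rw [hNBdef, transpose_add, h22sym, real_isHermitian_iff_isSymm.1 habsB.1]
  -- the PSD block matrix
  have hK : (fromBlocks absA (-C) (-C)ᵀ absB).PosSemidef := by
    refine kpsd habsA habsB ?_ ?_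
    · rw [transpose_neg, Matrix.neg_mul, Matrix.mul_neg, neg_neg]
      exact habsAsq
    · rw [transpose_neg, Matrix.neg_mul, Matrix.mul_neg, neg_neg]
      exact habsBsq
  set D : Matrix (PS nA ⊕ PS nB) (PS nA ⊕ PS nB) ℝ := fromBlocks NA 0 0 NB with hDdef
  have hD : D.PosDef := posdef_fromBlocks_diag hNA hNB
  have hMblocks : M = fromBlocks M.toBlocks₁₁ C Cᵀ M.toBlocks₂₂ := by
    rw [← h21, hCdef, fromBlocks_toBlocks]
  rw [transpose_neg] at hK
  have hgoal : D - M = fromBlocks (NA - M.toBlocks₁₁) (0 - C) (0 - Cᵀ) (NB - M.toBlocks₂₂) := by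
    ext (i|i) (j|j) <;>
      simp [hDdef, Matrix.sub_apply, Matrix.toBlocks₁₁, Matrix.toBlocks₁₂, Matrix.toBlocks₂₁,
        Matrix.toBlocks₂₂, hCdef] <;>
      exact congrFun (congrFun hMsym.symm _) _
  have hDM : D - M = fromBlocks absA (-C) (-Cᵀ) absB := by
    rw [hgoal, hNAdef, hNBdef, add_sub_cancel_left, add_sub_cancel_left, zero_sub, zero_sub]
  have hmono : (M⁻¹ - D⁻¹).PosSemidef := inv_sub_inv_psd hMd hD (by rw [hDM]; exact hK)
  -- inverses
  have hNAu : IsUnit NA.det := hNA.det_pos.ne'.isUnit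
  have hNBu : IsUnit NB.det := hNB.det_pos.ne'.isUnit
  have hSigu : IsUnit Sig.det := hpos.det_pos.ne'.isUnit
  have hDinv : D⁻¹ = fromBlocks NA⁻¹ 0 0 NB⁻¹ := by
    refine Matrix.inv_eq_right_inv ?_
    rw [hDdef, fromBlocks_multiply]
    simp [Matrix.mul_nonsing_inv _ hNAu, Matrix.mul_nonsing_inv _ hNBu, fromBlocks_one]
  have hMinv : M⁻¹ = (2 / hbar) • Sig := by
    refine Matrix.inv_eq_right_inv ?_
    rw [hMdef, Matrix.smul_mul, Matrix.mul_smul, smul_smul, Matrix.nonsing_inv_mul _ hSigu]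
    have : hbar / 2 * (2 / hbar) = 1 := by field_simp
    rw [this, one_smul]
  refine ⟨(hbar / 2) • NA⁻¹, (hbar / 2) • NB⁻¹, ?_, ?_, ?_, ?_, ?_⟩
  · show ((hbar / 2) • NA⁻¹)ᵀ = (hbar / 2) • NA⁻¹
    rw [transpose_smul, Matrix.transpose_nonsing_inv, hNAsym]
  · show ((hbar / 2) • NB⁻¹)ᵀ = (hbar / 2) • NB⁻¹
    rw [transpose_smul, Matrix.transpose_nonsing_inv, hNBsym]
  · exact quantumCond_of_eig nA hhb hNA hAc
  · exact quantumCond_of_eig nB hhb hNB hBc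
  · have hfinal : Sig - fromBlocks ((hbar / 2) • NA⁻¹) 0 0 ((hbar / 2) • NB⁻¹)
        = (hbar / 2) • (M⁻¹ - D⁻¹) := by
      rw [smul_sub, hMinv, hDinv, smul_smul]
      have h1 : hbar / 2 * (2 / hbar) = 1 := by field_simp
      rw [h1, one_smul, fromBlocks_smul, smul_zero, smul_zero]
    rw [hfinal]
    exact psd_smul_real hmono hhalf.le
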